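/- arXiv:1907.00658 — 2 statements merged into one kernel-verified Lean document; each statement's English description precedes it below -/
import Mathlib

section
/- The Δ₀-satisfaction relation Sat_{Δ₀}(x, y) — holding when x is the Gödel code of a Δ₀ formula θ and ℕ ⊨ θ(y⃗) with y substituted for all free variables — is a primitive recursive relation. -/
/-- Terms of the language of arithmetic `⟨0, 1, +, ×⟩` with variables among `v₀, …, v_{n-1}`. -/
inductive ATerm : ℕ → Type
  | zero {n} : ATerm n
  | one {n} : ATerm n
  | var {n} (i : Fin n) : ATerm n
  | add {n} (t s : ATerm n) : ATerm n
  | mul {n} (t s : ATerm n) : ATerm n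

/-- Evaluation of a term in the standard model `ℕ` under an assignment of the variables. -/
def ATerm.eval : ∀ {n}, ATerm n → (Fin n → ℕ) → ℕ
  | _, .zero, _ => 0
  | _, .one, _ => 1
  | _, .var i, v => v i
  | _, .add t s, v => t.eval v + s.eval v
  | _, .mul t s, v => t.eval v * s.eval v

/-- Bounded (Δ₀) formulas of the language of arithmetic `⟨0, 1, +, ×, ≤⟩` with free variables
among `v₀, …, v_{n-1}`: built from atomic formulas `t = s` and `t ≤ s` by Boolean connectives
and bounded quantifiers `∀ x ≤ t` and `∃ x ≤ t` (the newly bound variable is variable `0`,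
and the bound `t` may not contain it). -/
inductive Delta0 : ℕ → Type
  | eq {n} (t s : ATerm n) : Delta0 n
  | le {n} (t s : ATerm n) : Delta0 n
  | not {n} (φ : Delta0 n) : Delta0 n
  | and {n} (φ ψ : Delta0 n) : Delta0 n
  | or {n} (φ ψ : Delta0 n) : Delta0 n
  | imp {n} (φ ψ : Delta0 n) : Delta0 n
  | ball {n} (t : ATerm n) (φ : Delta0 (n + 1)) : Delta0 n
  | bex {n} (t : ATerm n) (φ : Delta0 (n + 1)) : Delta0 n

/-- Satisfaction of a Δ₀ formula in the standard model `ℕ`. -/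
def Delta0.Sat : ∀ {n}, Delta0 n → (Fin n → ℕ) → Prop
  | _, .eq t s, v => t.eval v = s.eval v
  | _, .le t s, v => t.eval v ≤ s.eval v
  | _, .not φ, v => ¬ φ.Sat v
  | _, .and φ ψ, v => φ.Sat v ∧ ψ.Sat v
  | _, .or φ ψ, v => φ.Sat v ∨ ψ.Sat v
  | _, .imp φ ψ, v => φ.Sat v → ψ.Sat v
  | _, .ball t φ, v => ∀ x ≤ t.eval v, φ.Sat (Fin.cons x v)
  | _, .bex t φ, v => ∃ x ≤ t.eval v, φ.Sat (Fin.cons x v)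

/-!
Terms and formulas are coded by iterated Cantor pairing, a node being `pair tag arguments`.
On codes, the truth value at `(c, v)` is computed from truth values at strictly smaller codes:
for a bounded quantifier, at the finitely many assignments `x :: v` with `x` at most the value
of the bound. A recursion along a measure whose list of recursive calls and whose combining
step are primitive recursive defines a primitive recursive function (`Primrec.nat_omega_rec'`).
Whether a number is the code of a formula with `k` free variables is decided by a recursion of
the same kind, and `Sat_{Δ₀}` is the conjunction of the two.
-/

def measureRec {β σ : Type*} (m : β → ℕ) (l : β → List β) (dec : ∀ b, ∀ b' ∈ l b, m b' < m b)
    (g : β → List σ → σ) (b : β) : σ :=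
  g b ((l b).attach.map fun b' => measureRec m l dec g b'.1)
termination_by m b
decreasing_by exact dec b b'.1 b'.2

section

variable {α β γ σ : Type*}

theorem measureRec_eq (m : β → ℕ) (l : β → List β) (dec : ∀ b, ∀ b' ∈ l b, m b' < m b)
    (g : β → List σ → σ) (b : β) :
    measureRec m l dec g b = g b ((l b).map (measureRec m l dec g)) := by
  rw [measureRec, List.map_attach_eq_pmap, List.pmap_eq_map]

variable [Primcodable α] [Primcodable β] [Primcodable γ] [Primcodable σ]

theorem Primrec.measureRec {m : β → ℕ} {l : β → List β} {dec : ∀ b, ∀ b' ∈ l b, m b' < m b}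
    {g : β → List σ → σ} (hm : Primrec m) (hl : Primrec l) (hg : Primrec₂ g) :
    Primrec (measureRec m l dec g) :=
  Primrec.nat_omega_rec' _ hm hl (Primrec₂.option_some_iff.mpr hg) dec fun b => by
    rw [measureRec_eq]

theorem Primrec.unpair₁ {f : α → ℕ} (hf : Primrec f) : Primrec fun a => (f a).unpair.1 :=
  Primrec.fst.comp (Primrec.unpair.comp hf)

theorem Primrec.unpair₂ {f : α → ℕ} (hf : Primrec f) : Primrec fun a => (f a).unpair.2 :=
  Primrec.snd.comp (Primrec.unpair.comp hf)

theorem Primrec.option_map₂ {f : α → Option β} {g : α → Option γ} {h : β → γ → σ}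
    (hf : Primrec f) (hg : Primrec g) (hh : Primrec₂ h) :
    Primrec fun a => Option.map₂ h (f a) (g a) :=
  Primrec.option_bind hf (Primrec.option_map (hg.comp Primrec.fst)
    (hh.comp (Primrec.snd.comp Primrec.fst) Primrec.snd).to₂).to₂

theorem Primrec.list_all {p : α → Bool} (hp : Primrec p) : Primrec fun L : List α => L.all p :=
  (PrimrecPred.forall_mem_list (Primrec.eq.comp hp (Primrec.const true))).decide.of_eq
    fun L => by simp [List.all_eq]

theorem Primrec.list_any {p : α → Bool} (hp : Primrec p) : Primrec fun L : List α => L.any p :=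
  (PrimrecPred.exists_mem_list (Primrec.eq.comp hp (Primrec.const true))).decide.of_eq
    fun L => by simp [List.any_eq]

theorem Primrec.list_replicate : Primrec₂ (List.replicate : ℕ → α → List α) :=
  (Primrec.list_map (Primrec.list_range.comp .fst) (Primrec.snd.comp Primrec.fst).to₂).of_eq
    fun p => by simp [List.map_const']

end

theorem Option.isSome_map₂ {α β γ : Type*} (f : α → β → γ) (a : Option α) (b : Option β) :
    (Option.map₂ f a b).isSome ↔ a.isSome ∧ b.isSome := by
  cases a <;> cases b <;> simp

theorem Nat.lt_pair_of_ne_zero {a : ℕ} (h : a ≠ 0) (b : ℕ) : b < Nat.pair a b := by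
  have := Nat.add_le_pair a b
  omega

theorem Nat.unpair_snd_lt {c : ℕ} (h : c.unpair.1 ≠ 0) : c.unpair.2 < c := by
  simpa using Nat.lt_pair_of_ne_zero h c.unpair.2

def ATerm.code {n : ℕ} : ATerm n → ℕ
  | .zero => Nat.pair 0 0
  | .one => Nat.pair 1 0
  | .var i => Nat.pair 2 i
  | .add t s => Nat.pair 3 (Nat.pair t.code s.code)
  | .mul t s => Nat.pair 4 (Nat.pair t.code s.code)

theorem ATerm.code_injective {n : ℕ} : Function.Injective (ATerm.code : ATerm n → ℕ) := by
  intro t s h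
  induction t generalizing s <;> cases s <;> simp only [ATerm.code, Nat.pair_eq_pair] at h <;>
    grind

def termCalls (c : ℕ) (v : List ℕ) : List (ℕ × List ℕ) :=
  if c.unpair.1 < 3 then [] else [(c.unpair.2.unpair.1, v), (c.unpair.2.unpair.2, v)]

def termStep (c : ℕ) (v : List ℕ) (L : List (Option ℕ)) : Option ℕ :=
  if c.unpair.1 = 0 then (if c.unpair.2 = 0 then some 0 else none)
  else if c.unpair.1 = 1 then (if c.unpair.2 = 0 then some 1 else none)
  else if c.unpair.1 = 2 then v[c.unpair.2]?
  else if c.unpair.1 = 3 then Option.map₂ (· + ·) (L.getD 0 none) (L.getD 1 none)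
  else if c.unpair.1 = 4 then Option.map₂ (· * ·) (L.getD 0 none) (L.getD 1 none)
  else none

theorem termCalls_lt (b : ℕ × List ℕ) : ∀ b' ∈ termCalls b.1 b.2, b'.1 < b.1 := by
  have := Nat.unpair_snd_lt (c := b.1)
  have := Nat.unpair_left_le b.1.unpair.2
  have := Nat.unpair_right_le b.1.unpair.2
  unfold termCalls
  split_ifs <;> simp
  omega

/-- `none` unless `c` codes a term in `v.length` variables. -/
def evalTermCode (c : ℕ) (v : List ℕ) : Option ℕ :=
  measureRec Prod.fst (fun b => termCalls b.1 b.2) termCalls_lt (fun b L => termStep b.1 b.2 L)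
    (c, v)

theorem evalTermCode_eq (c : ℕ) (v : List ℕ) :
    evalTermCode c v = termStep c v ((termCalls c v).map fun b => evalTermCode b.1 b.2) :=
  measureRec_eq ..

theorem evalTermCode_code {n : ℕ} (t : ATerm n) (w : Fin n → ℕ) :
    evalTermCode t.code (List.ofFn w) = some (t.eval w) := by
  induction t <;> rw [evalTermCode_eq] <;>
    simp_all [ATerm.code, ATerm.eval, termCalls, termStep]

theorem exists_code_of_evalTermCode {c n : ℕ} {v : List ℕ} (hv : v.length = n)
    (h : (evalTermCode c v).isSome) : ∃ t : ATerm n, t.code = c := by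
  subst hv
  induction c using Nat.strong_induction_on with
  | _ c ih =>
  obtain ⟨tag, a, b, rfl⟩ : ∃ tag a b, Nat.pair tag (Nat.pair a b) = c :=
    ⟨_, _, _, by rw [Nat.pair_unpair, Nat.pair_unpair]⟩
  have ha (h : tag ≠ 0) := (Nat.left_le_pair a b).trans_lt (Nat.lt_pair_of_ne_zero h _)
  have hb (h : tag ≠ 0) := (Nat.right_le_pair a b).trans_lt (Nat.lt_pair_of_ne_zero h _)
  rw [evalTermCode_eq] at h
  rcases tag with _ | _ | _ | _ | _ | tag <;>
    simp [termStep, termCalls, Option.isSome_map₂] at h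
  · exact ⟨.zero, by simp [ATerm.code, h]⟩
  · exact ⟨.one, by simp [ATerm.code, h]⟩
  · exact ⟨.var ⟨_, h⟩, rfl⟩
  · obtain ⟨⟨t, rfl⟩, s, rfl⟩ := And.imp (ih a (ha (by simp))) (ih b (hb (by simp))) h
    exact ⟨.add t s, rfl⟩
  · obtain ⟨⟨t, rfl⟩, s, rfl⟩ := And.imp (ih a (ha (by simp))) (ih b (hb (by simp))) h
    exact ⟨.mul t s, rfl⟩

theorem primrec_termCalls : Primrec₂ termCalls := by
  have hc : Primrec fun b : ℕ × List ℕ => b.1 := .fst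
  refine Primrec₂.mk ?_
  unfold termCalls
  exact .ite (Primrec.nat_lt.comp hc.unpair₁ (.const 3)) (.const [])
    (Primrec.list_cons.comp (hc.unpair₂.unpair₁.pair .snd)
      (Primrec.list_cons.comp (hc.unpair₂.unpair₂.pair .snd) (.const [])))

theorem primrec_termStep :
    Primrec₂ fun (b : ℕ × List ℕ) (L : List (Option ℕ)) => termStep b.1 b.2 L := by
  have hc : Primrec fun q : (ℕ × List ℕ) × List (Option ℕ) => q.1.1 := Primrec.fst.comp .fst
  have hv : Primrec fun q : (ℕ × List ℕ) × List (Option ℕ) => q.1.2 := Primrec.snd.comp .fst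
  have hL (i : ℕ) : Primrec fun q : (ℕ × List ℕ) × List (Option ℕ) => q.2.getD i none :=
    (Primrec.list_getD none).comp .snd (.const i)
  have tag (i : ℕ) : PrimrecPred fun q : (ℕ × List ℕ) × List (Option ℕ) => q.1.1.unpair.1 = i :=
    Primrec.eq.comp hc.unpair₁ (.const i)
  have leaf (i : ℕ) : Primrec fun q : (ℕ × List ℕ) × List (Option ℕ) =>
      if q.1.1.unpair.2 = 0 then some i else none :=
    .ite (Primrec.eq.comp hc.unpair₂ (.const 0)) (.const _) (.const _)
  refine Primrec₂.mk ?_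
  unfold termStep
  exact .ite (tag 0) (leaf 0) <| .ite (tag 1) (leaf 1) <|
    .ite (tag 2) (Primrec.list_getElem?.comp hv hc.unpair₂) <|
    .ite (tag 3) (.option_map₂ (hL 0) (hL 1) .nat_add) <|
    .ite (tag 4) (.option_map₂ (hL 0) (hL 1) .nat_mul) (.const none)

theorem primrec_evalTermCode : Primrec₂ evalTermCode :=
  Primrec.measureRec .fst primrec_termCalls primrec_termStep

def Delta0.code : ∀ {n : ℕ}, Delta0 n → ℕ
  | _, .eq t s => Nat.pair 0 (Nat.pair t.code s.code)
  | _, .le t s => Nat.pair 1 (Nat.pair t.code s.code)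
  | _, .not φ => Nat.pair 2 φ.code
  | _, .and φ ψ => Nat.pair 3 (Nat.pair φ.code ψ.code)
  | _, .or φ ψ => Nat.pair 4 (Nat.pair φ.code ψ.code)
  | _, .imp φ ψ => Nat.pair 5 (Nat.pair φ.code ψ.code)
  | _, .ball t φ => Nat.pair 6 (Nat.pair t.code φ.code)
  | _, .bex t φ => Nat.pair 7 (Nat.pair t.code φ.code)

theorem Delta0.code_injective {n : ℕ} : Function.Injective (Delta0.code : Delta0 n → ℕ) := by
  intro θ θ' h
  induction θ <;> cases θ' <;>
    simp only [Delta0.code, Nat.pair_eq_pair, ATerm.code_injective.eq_iff] at h <;> grind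

def formulaCalls (c : ℕ) (v : List ℕ) : List (ℕ × List ℕ) :=
  if c.unpair.1 < 2 then []
  else if c.unpair.1 = 2 then [(c.unpair.2, v)]
  else if c.unpair.1 < 6 then [(c.unpair.2.unpair.1, v), (c.unpair.2.unpair.2, v)]
  else (List.range ((evalTermCode c.unpair.2.unpair.1 v).getD 0 + 1)).map
    fun x => (c.unpair.2.unpair.2, x :: v)

def formulaStep (c : ℕ) (v : List ℕ) (L : List Bool) : Bool :=
  if c.unpair.1 = 0 then
    (evalTermCode c.unpair.2.unpair.1 v).getD 0 = (evalTermCode c.unpair.2.unpair.2 v).getD 0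
  else if c.unpair.1 = 1 then
    (evalTermCode c.unpair.2.unpair.1 v).getD 0 ≤ (evalTermCode c.unpair.2.unpair.2 v).getD 0
  else if c.unpair.1 = 2 then !L.getD 0 false
  else if c.unpair.1 = 3 then L.getD 0 false && L.getD 1 false
  else if c.unpair.1 = 4 then L.getD 0 false || L.getD 1 false
  else if c.unpair.1 = 5 then !L.getD 0 false || L.getD 1 false
  else if c.unpair.1 = 6 then L.all id
  else L.any id

theorem formulaCalls_lt (b : ℕ × List ℕ) : ∀ b' ∈ formulaCalls b.1 b.2, b'.1 < b.1 := by
  have := Nat.unpair_snd_lt (c := b.1)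
  have := Nat.unpair_left_le b.1.unpair.2
  have := Nat.unpair_right_le b.1.unpair.2
  unfold formulaCalls
  split_ifs <;> simp <;> omega

/-- Meaningless unless `c` codes a formula in `v.length` variables, which `isFormulaCode`
decides. -/
def evalFormulaCode (c : ℕ) (v : List ℕ) : Bool :=
  measureRec Prod.fst (fun b => formulaCalls b.1 b.2) formulaCalls_lt
    (fun b L => formulaStep b.1 b.2 L) (c, v)

theorem evalFormulaCode_eq (c : ℕ) (v : List ℕ) : evalFormulaCode c v =
    formulaStep c v ((formulaCalls c v).map fun b => evalFormulaCode b.1 b.2) :=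
  measureRec_eq ..

theorem evalFormulaCode_code {n : ℕ} (θ : Delta0 n) (w : Fin n → ℕ) :
    evalFormulaCode θ.code (List.ofFn w) = true ↔ θ.Sat w := by
  induction θ with
  | ball t φ ih | bex t φ ih =>
    have ih' (x : ℕ) := ih (Fin.cons x w)
    simp only [List.ofFn_succ, Fin.cons_zero, Fin.cons_succ] at ih'
    rw [evalFormulaCode_eq]
    simp [Delta0.code, Delta0.Sat, formulaCalls, formulaStep, evalTermCode_code, ih',
      Nat.lt_succ_iff]
  | _ =>
    rw [evalFormulaCode_eq]
    simp_all [Delta0.code, Delta0.Sat, formulaCalls, formulaStep, evalTermCode_code,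
      ← Bool.not_eq_true, imp_iff_not_or]

theorem primrec_formulaCalls : Primrec₂ formulaCalls := by
  have hc : Primrec fun b : ℕ × List ℕ => b.1 := .fst
  have hv : Primrec fun b : ℕ × List ℕ => b.2 := .snd
  have bound : Primrec fun b : ℕ × List ℕ =>
      (evalTermCode b.1.unpair.2.unpair.1 b.2).getD 0 + 1 :=
    Primrec.succ.comp (Primrec.option_getD.comp (primrec_evalTermCode.comp hc.unpair₂.unpair₁ hv)
      (.const 0))
  refine Primrec₂.mk ?_
  unfold formulaCalls
  exact .ite (Primrec.nat_lt.comp hc.unpair₁ (.const 2)) (.const []) <|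
    .ite (Primrec.eq.comp hc.unpair₁ (.const 2))
      (Primrec.list_cons.comp (hc.unpair₂.pair hv) (.const [])) <|
    .ite (Primrec.nat_lt.comp hc.unpair₁ (.const 6))
      (Primrec.list_cons.comp (hc.unpair₂.unpair₁.pair hv)
        (Primrec.list_cons.comp (hc.unpair₂.unpair₂.pair hv) (.const []))) <|
    Primrec.list_map (Primrec.list_range.comp bound)
      ((hc.unpair₂.unpair₂.comp .fst).pair (Primrec.list_cons.comp .snd (hv.comp .fst))).to₂

theorem primrec_formulaStep :
    Primrec₂ fun (b : ℕ × List ℕ) (L : List Bool) => formulaStep b.1 b.2 L := by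
  have hc : Primrec fun q : (ℕ × List ℕ) × List Bool => q.1.1 := Primrec.fst.comp .fst
  have hv : Primrec fun q : (ℕ × List ℕ) × List Bool => q.1.2 := Primrec.snd.comp .fst
  have hL (i : ℕ) : Primrec fun q : (ℕ × List ℕ) × List Bool => q.2.getD i false :=
    (Primrec.list_getD false).comp .snd (.const i)
  have tag (i : ℕ) : PrimrecPred fun q : (ℕ × List ℕ) × List Bool => q.1.1.unpair.1 = i :=
    Primrec.eq.comp hc.unpair₁ (.const i)
  have term₁ := Primrec.option_getD.comp (primrec_evalTermCode.comp hc.unpair₂.unpair₁ hv)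
    (.const 0)
  have term₂ := Primrec.option_getD.comp (primrec_evalTermCode.comp hc.unpair₂.unpair₂ hv)
    (.const 0)
  refine Primrec₂.mk ?_
  unfold formulaStep
  exact .ite (tag 0) (Primrec.eq.comp term₁ term₂).decide <|
    .ite (tag 1) (Primrec.nat_le.comp term₁ term₂).decide <|
    .ite (tag 2) (Primrec.not.comp (hL 0)) <|
    .ite (tag 3) (Primrec.and.comp (hL 0) (hL 1)) <|
    .ite (tag 4) (Primrec.or.comp (hL 0) (hL 1)) <|
    .ite (tag 5) (Primrec.or.comp (Primrec.not.comp (hL 0)) (hL 1)) <|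
    .ite (tag 6) ((Primrec.list_all .id).comp .snd) ((Primrec.list_any .id).comp .snd)

theorem primrec_evalFormulaCode : Primrec₂ evalFormulaCode :=
  Primrec.measureRec .fst primrec_formulaCalls primrec_formulaStep

def wellFormedCalls (c k : ℕ) : List (ℕ × ℕ) :=
  if c.unpair.1 < 2 then []
  else if c.unpair.1 = 2 then [(c.unpair.2, k)]
  else if c.unpair.1 < 6 then [(c.unpair.2.unpair.1, k), (c.unpair.2.unpair.2, k)]
  else [(c.unpair.2.unpair.2, k + 1)]

-- A term code is well formed in `k` variables iff it evaluates under one (equivalently, every)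
-- assignment of length `k`.
def wellFormedStep (c k : ℕ) (L : List Bool) : Bool :=
  if c.unpair.1 < 2 then
    (evalTermCode c.unpair.2.unpair.1 (List.replicate k 0)).isSome &&
      (evalTermCode c.unpair.2.unpair.2 (List.replicate k 0)).isSome
  else if c.unpair.1 < 6 then L.all id
  else if c.unpair.1 < 8 then
    (evalTermCode c.unpair.2.unpair.1 (List.replicate k 0)).isSome && L.all id
  else false

theorem wellFormedCalls_lt (b : ℕ × ℕ) : ∀ b' ∈ wellFormedCalls b.1 b.2, b'.1 < b.1 := by
  have := Nat.unpair_snd_lt (c := b.1)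
  have := Nat.unpair_left_le b.1.unpair.2
  have := Nat.unpair_right_le b.1.unpair.2
  unfold wellFormedCalls
  split_ifs <;> simp <;> omega

def isFormulaCode (c k : ℕ) : Bool :=
  measureRec Prod.fst (fun b => wellFormedCalls b.1 b.2) wellFormedCalls_lt
    (fun b L => wellFormedStep b.1 b.2 L) (c, k)

theorem isFormulaCode_eq (c k : ℕ) : isFormulaCode c k =
    wellFormedStep c k ((wellFormedCalls c k).map fun b => isFormulaCode b.1 b.2) :=
  measureRec_eq ..

theorem isFormulaCode_code {n : ℕ} (θ : Delta0 n) : isFormulaCode θ.code n = true := by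
  have hterm {m : ℕ} (t : ATerm m) : (evalTermCode t.code (List.replicate m 0)).isSome := by
    simpa [List.ofFn_const] using congrArg Option.isSome (evalTermCode_code t fun _ => 0)
  induction θ <;> rw [isFormulaCode_eq] <;>
    simp_all [Delta0.code, wellFormedCalls, wellFormedStep]

theorem exists_code_of_isFormulaCode {c k : ℕ} (h : isFormulaCode c k = true) :
    ∃ θ : Delta0 k, θ.code = c := by
  induction c using Nat.strong_induction_on generalizing k with
  | _ c ih =>
  obtain ⟨tag, a, b, rfl⟩ : ∃ tag a b, Nat.pair tag (Nat.pair a b) = c :=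
    ⟨_, _, _, by rw [Nat.pair_unpair, Nat.pair_unpair]⟩
  have hp (h : tag ≠ 0) := Nat.lt_pair_of_ne_zero h (Nat.pair a b)
  have ha (h : tag ≠ 0) := (Nat.left_le_pair a b).trans_lt (hp h)
  have hb (h : tag ≠ 0) := (Nat.right_le_pair a b).trans_lt (hp h)
  have term (i : ℕ) (h : (evalTermCode i (List.replicate k 0)).isSome) :
      ∃ t : ATerm k, t.code = i := exists_code_of_evalTermCode List.length_replicate h
  rw [isFormulaCode_eq] at h
  rcases tag with _ | _ | _ | _ | _ | _ | _ | _ | tag <;>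
    simp [wellFormedStep, wellFormedCalls, Nat.add_assoc] at h
  · obtain ⟨⟨t, rfl⟩, s, rfl⟩ := And.imp (term a) (term b) h
    exact ⟨.eq t s, rfl⟩
  · obtain ⟨⟨t, rfl⟩, s, rfl⟩ := And.imp (term a) (term b) h
    exact ⟨.le t s, rfl⟩
  · obtain ⟨φ, hφ⟩ := ih _ (hp (by simp)) h
    exact ⟨.not φ, by rw [Delta0.code, hφ]⟩
  · obtain ⟨⟨φ, rfl⟩, ψ, rfl⟩ := And.imp (ih a (ha (by simp))) (ih b (hb (by simp))) h
    exact ⟨.and φ ψ, rfl⟩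
  · obtain ⟨⟨φ, rfl⟩, ψ, rfl⟩ := And.imp (ih a (ha (by simp))) (ih b (hb (by simp))) h
    exact ⟨.or φ ψ, rfl⟩
  · obtain ⟨⟨φ, rfl⟩, ψ, rfl⟩ := And.imp (ih a (ha (by simp))) (ih b (hb (by simp))) h
    exact ⟨.imp φ ψ, rfl⟩
  · obtain ⟨⟨t, rfl⟩, φ, rfl⟩ := And.imp (term a) (ih b (hb (by simp))) h
    exact ⟨.ball t φ, rfl⟩
  · obtain ⟨⟨t, rfl⟩, φ, rfl⟩ := And.imp (term a) (ih b (hb (by simp))) h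
    exact ⟨.bex t φ, rfl⟩
  · omega

theorem primrec_wellFormedCalls : Primrec₂ wellFormedCalls := by
  have hc : Primrec fun b : ℕ × ℕ => b.1 := .fst
  have hk : Primrec fun b : ℕ × ℕ => b.2 := .snd
  refine Primrec₂.mk ?_
  unfold wellFormedCalls
  exact .ite (Primrec.nat_lt.comp hc.unpair₁ (.const 2)) (.const []) <|
    .ite (Primrec.eq.comp hc.unpair₁ (.const 2))
      (Primrec.list_cons.comp (hc.unpair₂.pair hk) (.const [])) <|
    .ite (Primrec.nat_lt.comp hc.unpair₁ (.const 6))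
      (Primrec.list_cons.comp (hc.unpair₂.unpair₁.pair hk)
        (Primrec.list_cons.comp (hc.unpair₂.unpair₂.pair hk) (.const []))) <|
    Primrec.list_cons.comp (hc.unpair₂.unpair₂.pair (Primrec.succ.comp hk)) (.const [])

theorem primrec_wellFormedStep :
    Primrec₂ fun (b : ℕ × ℕ) (L : List Bool) => wellFormedStep b.1 b.2 L := by
  have hc : Primrec fun q : (ℕ × ℕ) × List Bool => q.1.1 := Primrec.fst.comp .fst
  have hv : Primrec fun q : (ℕ × ℕ) × List Bool => List.replicate q.1.2 0 :=
    Primrec.list_replicate.comp (Primrec.snd.comp .fst) (.const 0)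
  have hL : Primrec fun q : (ℕ × ℕ) × List Bool => q.2.all id := (Primrec.list_all .id).comp .snd
  have lt (i : ℕ) : PrimrecPred fun q : (ℕ × ℕ) × List Bool => q.1.1.unpair.1 < i :=
    Primrec.nat_lt.comp hc.unpair₁ (.const i)
  have term₁ := Primrec.option_isSome.comp (primrec_evalTermCode.comp hc.unpair₂.unpair₁ hv)
  have term₂ := Primrec.option_isSome.comp (primrec_evalTermCode.comp hc.unpair₂.unpair₂ hv)
  refine Primrec₂.mk ?_
  unfold wellFormedStep
  exact .ite (lt 2) (Primrec.and.comp term₁ term₂) <| .ite (lt 6) hL <|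
    .ite (lt 8) (Primrec.and.comp term₁ hL) (.const false)

theorem primrec_isFormulaCode : Primrec₂ isFormulaCode :=
  Primrec.measureRec .fst primrec_wellFormedCalls primrec_wellFormedStep

def satCode (x y : ℕ) : Bool :=
  isFormulaCode x.unpair.1 x.unpair.2 && evalFormulaCode x.unpair.1 (List.replicate x.unpair.2 y)

theorem primrec_satCode : Primrec₂ satCode := by
  have hx : Primrec fun p : ℕ × ℕ => p.1 := .fst
  exact Primrec.and.comp (primrec_isFormulaCode.comp hx.unpair₁ hx.unpair₂)
    (primrec_evalFormulaCode.comp hx.unpair₁ (Primrec.list_replicate.comp hx.unpair₂ .snd))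

theorem satCode_iff (x y : ℕ) : satCode x y = true ↔
    ∃ (k : ℕ) (θ : Delta0 k), Nat.pair θ.code k = x ∧ θ.Sat fun _ => y := by
  have sat {k : ℕ} (θ : Delta0 k) :
      evalFormulaCode θ.code (List.replicate k y) = true ↔ θ.Sat fun _ => y := by
    rw [← List.ofFn_const]
    exact evalFormulaCode_code θ _
  constructor
  · intro h
    simp only [satCode, Bool.and_eq_true] at h
    obtain ⟨θ, hθ⟩ := exists_code_of_isFormulaCode h.1
    refine ⟨_, θ, by rw [hθ, Nat.pair_unpair], (sat θ).mp ?_⟩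
    rw [hθ]
    exact h.2
  · rintro ⟨k, θ, rfl, hθ⟩
    simp [satCode, isFormulaCode_code, sat, hθ]

/-- The Δ₀-satisfaction relation `Sat_{Δ₀}(x, y)` — holding when `x` is the Gödel code of a
Δ₀ formula `θ` and `ℕ ⊨ θ(y⃗)`, with `y` substituted for all free variables of `θ` — is a
primitive recursive relation (for a suitable injective Gödel coding of Δ₀ formulas). -/
theorem sat_delta0_primrec :
    ∃ code : (Σ k, Delta0 k) → ℕ, Function.Injective code ∧
      ∃ χ : ℕ → ℕ → Bool, Primrec₂ χ ∧
        ∀ x y : ℕ, χ x y = true ↔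
          ∃ (k : ℕ) (θ : Delta0 k), code ⟨k, θ⟩ = x ∧ θ.Sat fun _ => y := by
  refine ⟨fun θ => Nat.pair θ.2.code θ.1, ?_, satCode, primrec_satCode, satCode_iff⟩
  rintro ⟨k, θ⟩ ⟨k', θ'⟩ h
  obtain ⟨hθ, rfl⟩ := Nat.pair_eq_pair.mp h
  exact congrArg (Sigma.mk k) (Delta0.code_injective hθ)
end

section
/- If a consistent theory T extends Robinson arithmetic Q (in particular, T satisfies: T ⊢ i̅ ≠ j̅ for i ≠ j; T ⊢ n̄ ≤ m̄ and T ⊢ ∀y(m̄ ≤ y → n̄ ≤ y) for n ≤ m; T ⊢ ∀y(y ≤ n̄ ∨ n̄ ≤ y); T ⊢ ∀y(y ≤ n̄ ↔ ⋁_{i≤n} y = i̅); if T ⊢ φ with proof coded by k then T ⊢ Proof_T(k̄, ⌜φ⌝); and if k does not code a T-proof of φ then T ⊢ ¬Proof_T(k̄, ⌜φ⌝)), then every function weakly representable in T is representable in T. Specifically, if φ weakly represents f, then ψ(x,y) := ∃z[ρ(z,⌜φ(x,y)⌝) ∧ ∀y' ≤ z (y' ≠ y → ¬ρ(z,⌜φ(x,y')⌝))],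 where ρ(z,x) := ∃u ≤ z Proof_T(u,x), represents f. -/
open FirstOrder Language

/-- Function symbols of our arithmetical language: `0` and successor `S`
(so that every natural number `n` has a numeral `n̄ = Sⁿ0`). -/
inductive ArFunc : ℕ → Type
  | zero : ArFunc 0
  | succ : ArFunc 1

/-- Relation symbols of our arithmetical language: `<` and `≤`. -/
inductive ArRel : ℕ → Type
  | lt : ArRel 2
  | le : ArRel 2

/-- The first-order language `⟨0, S, <, ≤⟩`. -/
def Lar : Language := ⟨ArFunc, ArRel⟩

/-- The numeral `n̄ = Sⁿ0`. -/
def num {α : Type} : ℕ → Lar.Term α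
  | 0 => Term.func ArFunc.zero ![]
  | n + 1 => Term.func ArFunc.succ ![num n]

/-- The formula `t < s`. -/
def ltF {α : Type} (t s : Lar.Term α) : Lar.Formula α :=
  Relations.formula₂ ArRel.lt t s

/-- The formula `t ≤ s`. -/
def leF {α : Type} (t s : Lar.Term α) : Lar.Formula α :=
  Relations.formula₂ ArRel.le t s

/-- Universal quantification of a formula in one variable, as a sentence `∀ y, φ(y)`. -/
noncomputable def allS (φ : Lar.Formula (Fin 1)) : Lar.Sentence :=
  Formula.iAlls (Fin 1) (φ.relabel (fun _ : Fin 1 => (Sum.inr 0 : Empty ⊕ Fin 1)))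

/-- The finite disjunction `y = 0̄ ∨ y = 1̄ ∨ ⋯ ∨ y = n̄` (in the free variable `y`). -/
def eqDisj : ℕ → Lar.Formula (Fin 1)
  | 0 => Term.equal (Term.var 0) (num 0)
  | n + 1 => eqDisj n ⊔ Term.equal (Term.var 0) (num (n + 1))

/-- `T` proves `θ(n̄, y) ∧ θ(n̄, z) → y = z` universally, i.e. the sentence
`∀ y z (θ(n̄, y) ∧ θ(n̄, z) → y = z)`. -/
noncomputable def uniqueSent (θ : Lar.Formula (Fin 2)) (n : ℕ) : Lar.Sentence :=
  Formula.iAlls (Fin 2) (Formula.relabel (fun i : Fin 2 => (Sum.inr i : Empty ⊕ Fin 2))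
    (Formula.imp ((θ.subst ![num n, Term.var 0]) ⊓ (θ.subst ![num n, Term.var 1]))
      (Term.equal (Term.var 0) (Term.var 1))))

/-- The sentence `φ(n̄, m̄)`: substitute the numerals `n̄, m̄` for the two free variables. -/
def substS (φ : Lar.Formula (Fin 2)) (n m : ℕ) : Lar.Sentence :=
  φ.subst ![num n, num m]

/-- The sentence `Pr(k̄, n̄, m̄)`. -/
def substS3 (Pr : Lar.Formula (Fin 3)) (k n m : ℕ) : Lar.Sentence :=
  Pr.subst ![num k, num n, num m]
/-!
Work in an arbitrary model `M` of `T`. Some `k` codes a proof of `φ(n̄, f(n))`, and `f(n) ≤ k`.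
Every element below a numeral is a numeral, and a proof of `φ(n̄, ī)` coded below a numeral is an
actual proof, which forces `i = f(n)`. Hence `z = k̄` witnesses `ψ(n̄, f(n))`. Conversely, if
`z` witnesses `ψ(n̄, m̄)`, compare `z` with `k̄`: if `z ≤ k̄`, then `z` is a numeral and `m = f(n)`;
if `k̄ ≤ z`, then `f(n) ≤ z` also has a proof below `z`, so `m = f(n)` by the uniqueness clause.
-/

theorem Matrix.comp_vecCons {α β : Type*} {n : ℕ} (f : α → β) (a : α) (v : Fin n → α) :
    f ∘ vecCons a v = vecCons (f a) (f ∘ v) := by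
  funext i
  cases i using Fin.cases <;> rfl

theorem Matrix.comp_vecEmpty {α β : Type*} (f : α → β) : f ∘ ![] = ![] :=
  Matrix.empty_eq _

theorem FirstOrder.Language.BoundedFormula.realize_relabel_formula {L : Language} {M : Type*}
    [L.Structure M] {α β : Type*} {m : ℕ} (φ : L.Formula α) (g : α → β ⊕ Fin m) (v : β → M)
    (xs : Fin m → M) :
    (BoundedFormula.relabel g φ).Realize v xs ↔ φ.Realize (Sum.elim v xs ∘ g) := by
  rw [BoundedFormula.realize_relabel]
  exact iff_of_eq (congrArg _ (Subsingleton.elim _ _))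

section Semantics

variable {M : Type*} [Lar.Structure M]

variable (M) in
def numVal : ℕ → M
  | 0 => Structure.funMap (L := Lar) ArFunc.zero ![]
  | n + 1 => Structure.funMap (L := Lar) ArFunc.succ ![numVal n]

def leRel (a b : M) : Prop :=
  Structure.RelMap (L := Lar) ArRel.le ![a, b]

@[simp]
theorem realize_num {α : Type} (v : α → M) (n : ℕ) : (num n).realize v = numVal M n := by
  induction n with
  | zero => simp only [num, numVal, Term.realize]; congr; funext i; exact i.elim0
  | succ n ih => simp only [num, numVal, Term.realize]; congr; funext i; fin_cases i; exact ih

@[simp]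
theorem realize_leF {α : Type} (t s : Lar.Term α) (v : α → M) :
    (leF t s).Realize v ↔ leRel (t.realize v) (s.realize v) :=
  Formula.realize_rel₂

theorem realize_leBoundedFormula {α : Type} {n : ℕ} (t s : Lar.Term (α ⊕ Fin n)) (v : α → M)
    (xs : Fin n → M) :
    (Relations.boundedFormula₂ (L := Lar) ArRel.le t s).Realize v xs ↔
      leRel (t.realize (Sum.elim v xs)) (s.realize (Sum.elim v xs)) :=
  BoundedFormula.realize_rel₂

theorem realize_eqDisj (v : Fin 1 → M) (n : ℕ) :
    (eqDisj n).Realize v ↔ ∃ i ≤ n, v 0 = numVal M i := by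
  induction n with
  | zero => simp [eqDisj]
  | succ n ih =>
    simp only [eqDisj, Formula.realize_sup, ih, Formula.realize_equal, Term.realize_var,
      realize_num, Nat.le_succ_iff_eq_or_le]
    grind

theorem realize_allS (φ : Lar.Formula (Fin 1)) :
    M ⊨ allS φ ↔ ∀ y : M, φ.Realize (fun _ => y) := by
  rw [allS, Sentence.Realize, Formula.realize_iAlls]
  refine ⟨fun h y => Formula.realize_relabel.1 (h fun _ => y), fun h w => ?_⟩
  rw [Formula.realize_relabel]
  exact h (w 0)

theorem realize_substS (θ : Lar.Formula (Fin 2)) (n m : ℕ) :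
    M ⊨ substS θ n m ↔ θ.Realize ![numVal M n, numVal M m] := by
  rw [substS, Sentence.Realize, Formula.Realize, BoundedFormula.realize_subst]
  refine iff_of_eq (congrArg (BoundedFormula.Realize θ · default) ?_)
  funext i; fin_cases i <;> simp

theorem realize_substS3 (θ : Lar.Formula (Fin 3)) (k n m : ℕ) :
    M ⊨ substS3 θ k n m ↔ θ.Realize ![numVal M k, numVal M n, numVal M m] := by
  rw [substS3, Sentence.Realize, Formula.Realize, BoundedFormula.realize_subst]
  refine iff_of_eq (congrArg (BoundedFormula.Realize θ · default) ?_)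
  funext i; fin_cases i <;> simp

end Semantics

section Rosser

variable (Pr : Lar.Formula (Fin 3))

/-- `ρ(z, x, y) := ∃ u ≤ z, Pr(u, x, y)`, with the free variables ordered `z, x, y`. -/
def provedBelow : Lar.Formula (Fin 3) :=
  (Relations.boundedFormula₂ (L := Lar) ArRel.le &0 (Term.var (Sum.inl 0)) ⊓
    BoundedFormula.relabel ![Sum.inr 0, Sum.inl 1, Sum.inl 2] Pr).ex

/-- `ψ(x, y) := ∃ z [ρ(z, x, y) ∧ ∀ y' ≤ z (y' ≠ y → ¬ρ(z, x, y'))]`. -/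
def rosserFormula : Lar.Formula (Fin 2) :=
  (BoundedFormula.relabel ![Sum.inr 0, Sum.inl 0, Sum.inl 1] (provedBelow Pr) ⊓
    ((Relations.boundedFormula₂ (L := Lar) ArRel.le &1 &0).imp
      ((Term.bdEqual &1 (Term.var (Sum.inl 1))).not.imp
        (BoundedFormula.relabel ![Sum.inr 0, Sum.inl 0, Sum.inr 1] (provedBelow Pr)).not)).all).ex

variable {M : Type*} [Lar.Structure M]

theorem realize_provedBelow (z x y : M) :
    (provedBelow Pr).Realize ![z, x, y] ↔ ∃ u, leRel u z ∧ Pr.Realize ![u, x, y] := by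
  rw [provedBelow, Formula.Realize]
  simp only [BoundedFormula.realize_ex, BoundedFormula.realize_inf, realize_leBoundedFormula,
    BoundedFormula.realize_relabel_formula, Matrix.comp_vecCons, Matrix.comp_vecEmpty]
  exact Iff.rfl

theorem realize_rosserFormula (x y : M) :
    (rosserFormula Pr).Realize ![x, y] ↔ ∃ z, (provedBelow Pr).Realize ![z, x, y] ∧
      ∀ y', leRel y' z → y' ≠ y → ¬ (provedBelow Pr).Realize ![z, x, y'] := by
  rw [rosserFormula, Formula.Realize]
  simp only [BoundedFormula.realize_ex, BoundedFormula.realize_inf, BoundedFormula.realize_all,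
    BoundedFormula.realize_imp, BoundedFormula.realize_not, BoundedFormula.realize_bdEqual,
    realize_leBoundedFormula, BoundedFormula.realize_relabel_formula, Matrix.comp_vecCons,
    Matrix.comp_vecEmpty]
  exact Iff.rfl

end Rosser

section Models

variable {T : Lar.Theory} (M : T.ModelType)

theorem numVal_injective
    (hneq : ∀ i j : ℕ, i ≠ j → T ⊨ᵇ Formula.not (Term.equal (num i) (num j) : Lar.Sentence)) :
    Function.Injective (numVal M) := by
  intro i j hij
  by_contra hne
  exact (Sentence.realize_not _).1 ((hneq i j hne).realize_sentence M)
    (by simpa [Sentence.Realize] using hij)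

theorem numVal_le_of_le
    (hle2 : ∀ n m : ℕ, n ≤ m →
      T ⊨ᵇ allS (Formula.imp (leF (num m) (Term.var 0)) (leF (num n) (Term.var 0))))
    {n m : ℕ} (hnm : n ≤ m) (y : M) : leRel (numVal M m) y → leRel (numVal M n) y := by
  simpa using (realize_allS _).1 ((hle2 n m hnm).realize_sentence M) y

theorem le_numVal_or_numVal_le
    (hb : ∀ n : ℕ, T ⊨ᵇ allS ((leF (Term.var 0) (num n)) ⊔ (leF (num n) (Term.var 0))))
    (y : M) (n : ℕ) : leRel y (numVal M n) ∨ leRel (numVal M n) y := by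
  simpa using (realize_allS _).1 ((hb n).realize_sentence M) y

theorem le_numVal_iff
    (hc : ∀ n : ℕ, T ⊨ᵇ allS (Formula.iff (leF (Term.var 0) (num n)) (eqDisj n)))
    (y : M) (n : ℕ) : leRel y (numVal M n) ↔ ∃ i ≤ n, y = numVal M i := by
  simpa [realize_eqDisj] using (realize_allS _).1 ((hc n).realize_sentence M) y

end Models

section Representation

variable {T : Lar.Theory} {f : ℕ → ℕ} {φ : Lar.Formula (Fin 2)} {Pr : Lar.Formula (Fin 3)}
  {PrfCode : ℕ → Lar.Sentence → Prop}

theorem eq_of_provedBelow_numVal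
    (hc : ∀ n : ℕ, T ⊨ᵇ allS (Formula.iff (leF (Term.var 0) (num n)) (eqDisj n)))
    (hprov : ∀ σ : Lar.Sentence, (T ⊨ᵇ σ ↔ ∃ k, PrfCode k σ))
    (he : ∀ k n m : ℕ, ¬ PrfCode k (substS φ n m) → T ⊨ᵇ Formula.not (substS3 Pr k n m))
    (hw2 : ∀ n m : ℕ, f n ≠ m → ¬ T ⊨ᵇ substS φ n m)
    (M : T.ModelType) {K n m : ℕ}
    (h : (provedBelow Pr).Realize ![numVal M K, numVal M n, numVal M m]) : f n = m := by
  by_contra hne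
  obtain ⟨u, hu, hPr⟩ := (realize_provedBelow Pr _ _ _).1 h
  obtain ⟨k, -, rfl⟩ := (le_numVal_iff M hc u K).1 hu
  have hk : ¬ PrfCode k (substS φ n m) := fun hk => hw2 n m hne ((hprov _).2 ⟨k, hk⟩)
  exact (Sentence.realize_not _).1 ((he k n m hk).realize_sentence M)
    ((realize_substS3 Pr k n m).2 hPr)

theorem provedBelow_of_prfCode
    (hd : ∀ k n m : ℕ, PrfCode k (substS φ n m) → T ⊨ᵇ substS3 Pr k n m)
    (M : T.ModelType) {k n m : ℕ} (hk : PrfCode k (substS φ n m)) {z : M}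
    (hz : leRel (numVal M k) z) : (provedBelow Pr).Realize ![z, numVal M n, numVal M m] :=
  (realize_provedBelow Pr _ _ _).2
    ⟨numVal M k, hz, (realize_substS3 Pr k n m).1 ((hd k n m hk).realize_sentence M)⟩

theorem models_rosserFormula_of_eq
    (hc : ∀ n : ℕ, T ⊨ᵇ allS (Formula.iff (leF (Term.var 0) (num n)) (eqDisj n)))
    (hprov : ∀ σ : Lar.Sentence, (T ⊨ᵇ σ ↔ ∃ k, PrfCode k σ))
    (hd : ∀ k n m : ℕ, PrfCode k (substS φ n m) → T ⊨ᵇ substS3 Pr k n m)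
    (he : ∀ k n m : ℕ, ¬ PrfCode k (substS φ n m) → T ⊨ᵇ Formula.not (substS3 Pr k n m))
    (hw1 : ∀ n m : ℕ, f n = m → T ⊨ᵇ substS φ n m)
    (hw2 : ∀ n m : ℕ, f n ≠ m → ¬ T ⊨ᵇ substS φ n m) {n m : ℕ} (hm : f n = m) :
    T ⊨ᵇ substS (rosserFormula Pr) n m := by
  subst hm
  obtain ⟨k, hk⟩ := (hprov _).1 (hw1 n (f n) rfl)
  refine Theory.models_sentence_iff.2 fun M => (realize_substS _ n (f n)).2 ?_
  have hkk : leRel (numVal M k) (numVal M k) := (le_numVal_iff M hc _ k).2 ⟨k, le_rfl, rfl⟩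
  refine (realize_rosserFormula Pr _ _).2 ⟨numVal M k, provedBelow_of_prfCode hd M hk hkk, ?_⟩
  intro y hy hne hρ
  obtain ⟨i, -, rfl⟩ := (le_numVal_iff M hc y k).1 hy
  exact hne (congrArg (numVal M) (eq_of_provedBelow_numVal hc hprov he hw2 M hρ).symm)

theorem models_not_rosserFormula_of_ne
    (hneq : ∀ i j : ℕ, i ≠ j → T ⊨ᵇ Formula.not (Term.equal (num i) (num j) : Lar.Sentence))
    (hle2 : ∀ n m : ℕ, n ≤ m →
      T ⊨ᵇ allS (Formula.imp (leF (num m) (Term.var 0)) (leF (num n) (Term.var 0))))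
    (hb : ∀ n : ℕ, T ⊨ᵇ allS ((leF (Term.var 0) (num n)) ⊔ (leF (num n) (Term.var 0))))
    (hc : ∀ n : ℕ, T ⊨ᵇ allS (Formula.iff (leF (Term.var 0) (num n)) (eqDisj n)))
    (hprov : ∀ σ : Lar.Sentence, (T ⊨ᵇ σ ↔ ∃ k, PrfCode k σ))
    (hd : ∀ k n m : ℕ, PrfCode k (substS φ n m) → T ⊨ᵇ substS3 Pr k n m)
    (he : ∀ k n m : ℕ, ¬ PrfCode k (substS φ n m) → T ⊨ᵇ Formula.not (substS3 Pr k n m))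
    (hbound : ∀ k n m : ℕ, PrfCode k (substS φ n m) → m ≤ k)
    (hw1 : ∀ n m : ℕ, f n = m → T ⊨ᵇ substS φ n m)
    (hw2 : ∀ n m : ℕ, f n ≠ m → ¬ T ⊨ᵇ substS φ n m) {n m : ℕ} (hm : f n ≠ m) :
    T ⊨ᵇ Formula.not (substS (rosserFormula Pr) n m) := by
  obtain ⟨k, hk⟩ := (hprov _).1 (hw1 n (f n) rfl)
  refine Theory.models_sentence_iff.2 fun M => (Sentence.realize_not _).2 fun hψ => ?_
  obtain ⟨z, hρ, hleast⟩ := (realize_rosserFormula Pr _ _).1 ((realize_substS _ n m).1 hψ)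
  rcases le_numVal_or_numVal_le M hb z k with hzk | hkz
  · obtain ⟨j, -, rfl⟩ := (le_numVal_iff M hc z k).1 hzk
    exact hm (eq_of_provedBelow_numVal hc hprov he hw2 M hρ)
  · exact hleast (numVal M (f n)) (numVal_le_of_le M hle2 (hbound k n (f n) hk) z hkz)
      (fun h => hm (numVal_injective M hneq h)) (provedBelow_of_prfCode hd M hk hkz)

end Representation

theorem weakly_representable_implies_representable_general
    (T : Lar.Theory)
    (f : ℕ → ℕ) (φ : Lar.Formula (Fin 2))
    (Pr : Lar.Formula (Fin 3)) (PrfCode : ℕ → Lar.Sentence → Prop)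
    (hneq : ∀ i j : ℕ, i ≠ j → T ⊨ᵇ Formula.not (Term.equal (num i) (num j) : Lar.Sentence))
    (hle2 : ∀ n m : ℕ, n ≤ m →
      T ⊨ᵇ allS (Formula.imp (leF (num m) (Term.var 0)) (leF (num n) (Term.var 0))))
    (hb : ∀ n : ℕ, T ⊨ᵇ allS ((leF (Term.var 0) (num n)) ⊔ (leF (num n) (Term.var 0))))
    (hc : ∀ n : ℕ, T ⊨ᵇ allS (Formula.iff (leF (Term.var 0) (num n)) (eqDisj n)))
    (hprov : ∀ σ : Lar.Sentence, (T ⊨ᵇ σ ↔ ∃ k, PrfCode k σ))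
    (hd : ∀ k n m : ℕ, PrfCode k (substS φ n m) → T ⊨ᵇ substS3 Pr k n m)
    (he : ∀ k n m : ℕ, ¬ PrfCode k (substS φ n m) → T ⊨ᵇ Formula.not (substS3 Pr k n m))
    (hbound : ∀ k n m : ℕ, PrfCode k (substS φ n m) → m ≤ k)
    (hw1 : ∀ n m : ℕ, f n = m → T ⊨ᵇ substS φ n m)
    (hw2 : ∀ n m : ℕ, f n ≠ m → ¬ T ⊨ᵇ substS φ n m) :
    ∃ ψ : Lar.Formula (Fin 2),
      (∀ n m : ℕ, f n = m → T ⊨ᵇ substS ψ n m) ∧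
      (∀ n m : ℕ, f n ≠ m → T ⊨ᵇ Formula.not (substS ψ n m)) := by
  exact ⟨rosserFormula Pr, fun _ _ hm => models_rosserFormula_of_eq hc hprov hd he hw1 hw2 hm,
    fun _ _ hm => models_not_rosserFormula_of_ne hneq hle2 hb hc hprov hd he hbound hw1 hw2 hm⟩

/-- If a consistent theory `T` extends Robinson arithmetic `Q`, in the sense that:
(a) `T ⊢ ī ≠ j̄` for `i ≠ j`, and `T ⊢ n̄ ≤ m̄` and `T ⊢ ∀y (m̄ ≤ y → n̄ ≤ y)` for `n ≤ m`;
(b) `T ⊢ ∀y (y ≤ n̄ ∨ n̄ ≤ y)`;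
(c) `T ⊢ ∀y (y ≤ n̄ ↔ ⋁_{i ≤ n} y = ī)`;
and `T` has a proof predicate `Pr(u, x, y)` (expressing `Proof_T(u, ⌜φ(x, y)⌝)` for the
weakly representing formula `φ` below) together with a proof-coding relation `PrfCode`
("`k` codes a `T`-proof of the sentence `σ`") such that: `T ⊢ σ` iff some `k` codes a
`T`-proof of `σ`; (d) if `k` codes a `T`-proof of `φ(n̄, m̄)` then `T ⊢ Pr(k̄, n̄, m̄)`;
(e) if `k` does not code a `T`-proof of `φ(n̄, m̄)` then `T ⊢ ¬Pr(k̄, n̄, m̄)`; and the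
Gödel coding is such that any code of a proof of `φ(n̄, m̄)` is at least `m`; then every
function `f` weakly representable in `T` (by `φ`) is representable in `T` (the representing
formula being `ψ(x,y) := ∃z[ρ(z,x,y) ∧ ∀y' ≤ z (y' ≠ y → ¬ρ(z,x,y'))]`, where
`ρ(z,x,y) := ∃u ≤ z Pr(u,x,y)`). -/
theorem weakly_representable_implies_representable
    (T : Lar.Theory) (hcon : ¬ T ⊨ᵇ (⊥ : Lar.Sentence))
    (f : ℕ → ℕ) (φ : Lar.Formula (Fin 2))
    (Pr : Lar.Formula (Fin 3)) (PrfCode : ℕ → Lar.Sentence → Prop)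
    (hneq : ∀ i j : ℕ, i ≠ j → T ⊨ᵇ Formula.not (Term.equal (num i) (num j) : Lar.Sentence))
    (hle1 : ∀ n m : ℕ, n ≤ m → T ⊨ᵇ (leF (num n) (num m) : Lar.Sentence))
    (hle2 : ∀ n m : ℕ, n ≤ m →
      T ⊨ᵇ allS (Formula.imp (leF (num m) (Term.var 0)) (leF (num n) (Term.var 0))))
    (hb : ∀ n : ℕ, T ⊨ᵇ allS ((leF (Term.var 0) (num n)) ⊔ (leF (num n) (Term.var 0))))
    (hc : ∀ n : ℕ, T ⊨ᵇ allS (Formula.iff (leF (Term.var 0) (num n)) (eqDisj n)))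
    (hprov : ∀ σ : Lar.Sentence, (T ⊨ᵇ σ ↔ ∃ k, PrfCode k σ))
    (hd : ∀ k n m : ℕ, PrfCode k (substS φ n m) → T ⊨ᵇ substS3 Pr k n m)
    (he : ∀ k n m : ℕ, ¬ PrfCode k (substS φ n m) → T ⊨ᵇ Formula.not (substS3 Pr k n m))
    (hbound : ∀ k n m : ℕ, PrfCode k (substS φ n m) → m ≤ k)
    (hw1 : ∀ n m : ℕ, f n = m → T ⊨ᵇ substS φ n m)
    (hw2 : ∀ n m : ℕ, f n ≠ m → ¬ T ⊨ᵇ substS φ n m) :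
    ∃ ψ : Lar.Formula (Fin 2),
      (∀ n m : ℕ, f n = m → T ⊨ᵇ substS ψ n m) ∧
      (∀ n m : ℕ, f n ≠ m → T ⊨ᵇ Formula.not (substS ψ n m)) :=
  weakly_representable_implies_representable_general T f φ Pr PrfCode hneq hle2 hb hc hprov hd he
    hbound hw1 hw2
end
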